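/- arXiv:1612.06480 — 2 statements merged into one kernel-verified Lean document; each statement's English description precedes it below -/
import Mathlib

section
/- (Logarithmic derivative of the Selberg zeta function as a sum over closed geodesics.) Let k ∈ ℤ and s ∈ ℂ with Re(s) > 2. Then the family over (i, m) ∈ I × {m ∈ ℕ : m ≥ 1} given by ℓ i · exp(i·(k/2)·m·θ i) · exp(−s·m·ℓ i) / ( (1 − exp(−m(ℓ i + i·θ i)))·(1 − exp(−m(ℓ i − i·θ i))) ) is summable, and the function w ↦ Z(k, w) has, at the point s, a complex derivative equal to Z(k, s) · ∑_{i ∈ I} ∑_{m ≥ 1} ℓ i · exp(i·(k/2)·m·θ i) · exp(−s·m·ℓ i) / ( (1 − exp(−m(ℓ i + i·θ i)))·(1 − exp(−m(ℓ i − i·θ i))) ); equivalently, d/ds log Z(k, s) equals this double sum. -/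
/-- `R(σ_k, s) = ∏_{i ∈ I} (1 − e^{i(k/2)θ_i} e^{−s ℓ_i})`. -/
noncomputable def Rz {I : Type*} (ℓ θ : I → ℝ) (k : ℤ) (s : ℂ) : ℂ :=
  ∏' i : I, (1 - Complex.exp (Complex.I * ((k : ℂ) / 2) * (θ i : ℂ))
    * Complex.exp (-s * (ℓ i : ℂ)))

/-- Selberg zeta function
`Z(σ_k, s) = ∏_{i ∈ I} ∏_{p,q ≥ 0} (1 − e^{i(k/2)θ_i} e^{−p(ℓ_i+iθ_i)} e^{−q(ℓ_i−iθ_i)} e^{−s ℓ_i})`. -/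
noncomputable def Zs {I : Type*} (ℓ θ : I → ℝ) (k : ℤ) (s : ℂ) : ℂ :=
  ∏' x : I × ℕ × ℕ,
    (1 - Complex.exp (Complex.I * ((k : ℂ) / 2) * (θ x.1 : ℂ))
       * Complex.exp (-(x.2.1 : ℂ) * ((ℓ x.1 : ℂ) + Complex.I * (θ x.1 : ℂ)))
       * Complex.exp (-(x.2.2 : ℂ) * ((ℓ x.1 : ℂ) - Complex.I * (θ x.1 : ℂ)))
       * Complex.exp (-s * (ℓ x.1 : ℂ)))

/-!
For `Re w ≥ 2` the factor `1 - a_x(w)` of `Zs` indexed by `x = (i, p, q)` has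
`‖a_x(w)‖ ≤ e^{-(p + q + 2) ℓ_i}`. Summability of `e^{-δ ℓ_i}` with `δ < 2` bounds `ℓ_i` below and
makes `∑_i ℓ_i e^{-2 ℓ_i}` converge, so these bounds stay summable over all `x` even after
multiplying by `ℓ_i`. Hence `Zs = exp (∑_x log (1 - a_x))` on the half-plane `Re w > 2`, where the
series of derivatives `ℓ_i a_x / (1 - a_x)` is dominated by a summable majorant and can be
differentiated termwise. Expanding `a / (1 - a) = ∑_{m ≥ 1} a^m` and summing the two geometric
series in `p` and `q` first regroups `∑_x ℓ_i a_x / (1 - a_x)` as the sum over the closed geodesics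
`γ₀^m`.
-/
open Complex Filter Topology
open scoped Real

lemma exists_pos_forall_le_of_summable_exp {ι : Type*} {ℓ : ι → ℝ} {δ : ℝ}
    (hℓ : ∀ i, 0 < ℓ i) (hsum : Summable fun i => rexp (-δ * ℓ i)) :
    ∃ c > 0, ∀ i, c ≤ ℓ i := by
  rcases isEmpty_or_nonempty ι with _ | _
  · exact ⟨1, one_pos, isEmptyElim⟩
  have hsum' : Summable fun i => rexp (-max δ 1 * ℓ i) :=
    hsum.of_nonneg_of_le (fun _ => (Real.exp_pos _).le) fun i =>
      Real.exp_le_exp.2 (by nlinarith [le_max_left δ 1, hℓ i])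
  have hneg : -max δ 1 < 0 := by linarith [le_max_right δ 1]
  have htendsto : Tendsto ℓ cofinite atTop :=
    (tendsto_const_mul_atBot_of_neg hneg).1
      (Real.tendsto_exp_comp_nhds_zero.1 hsum'.tendsto_cofinite_zero)
  obtain ⟨i₀, hi₀⟩ := htendsto.exists_forall_le
  exact ⟨ℓ i₀, hℓ i₀, hi₀⟩

lemma summable_mul_exp_neg_two_mul {ι : Type*} {ℓ : ι → ℝ} {δ : ℝ} (hℓ : ∀ i, 0 ≤ ℓ i)
    (hδ : δ < 2) (hsum : Summable fun i => rexp (-δ * ℓ i)) :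
    Summable fun i => ℓ i * rexp (-2 * ℓ i) := by
  refine (hsum.mul_left (2 - δ)⁻¹).of_nonneg_of_le
    (fun i => mul_nonneg (hℓ i) (Real.exp_pos _).le) fun i => ?_
  rw [le_inv_mul_iff₀ (sub_pos.2 hδ)]
  calc (2 - δ) * (ℓ i * rexp (-2 * ℓ i)) = (2 - δ) * ℓ i * rexp (-2 * ℓ i) := by ring
    _ ≤ rexp ((2 - δ) * ℓ i) * rexp (-2 * ℓ i) := by
      gcongr
      linarith [Real.add_one_le_exp ((2 - δ) * ℓ i)]
    _ = rexp (-δ * ℓ i) := by rw [← Real.exp_add]; ring_nf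

lemma summable_mul_exp_neg_pow_mul_pow {ι : Type*} {ℓ g : ι → ℝ} {c : ℝ} (hc : 0 < c)
    (hcℓ : ∀ i, c ≤ ℓ i) (hg : Summable g) (hg0 : ∀ i, 0 ≤ g i) :
    Summable fun x : ι × ℕ × ℕ => g x.1 * rexp (-ℓ x.1) ^ x.2.1 * rexp (-ℓ x.1) ^ x.2.2 := by
  have hε : rexp (-c) < 1 := Real.exp_lt_one_iff.2 (neg_lt_zero.2 hc)
  have hgeom := summable_geometric_of_lt_one (Real.exp_pos _).le hε
  refine (hg.mul_of_nonneg (hgeom.mul_of_nonneg hgeom (fun _ => by positivity)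
    (fun _ => by positivity)) hg0 fun _ => by positivity).of_nonneg_of_le
    (fun x => by have := hg0 x.1; positivity) fun x => ?_
  have := hg0 x.1
  rw [mul_assoc]
  gcongr <;> exact hcℓ x.1

lemma mul_div_one_sub_le {t v B ε : ℝ} (ht : 0 ≤ t) (hv : 0 ≤ v) (hvB : v ≤ B) (hvε : v ≤ ε)
    (hε : ε < 1) : t * v / (1 - v) ≤ t * B / (1 - ε) := by
  have : 0 < 1 - ε := sub_pos.2 hε
  have : 0 ≤ B := hv.trans hvB
  gcongr

lemma hasSum_pow_of_one_le {K : Type*} [NormedField K] {u : K} (hu : ‖u‖ < 1) :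
    HasSum (fun m : {m : ℕ // 1 ≤ m} => u ^ (m : ℕ)) (u / (1 - u)) := by
  let e : ℕ ≃ {m : ℕ // 1 ≤ m} :=
    ⟨fun n => ⟨n + 1, n.succ_pos⟩, fun m => m - 1, fun _ => rfl,
      fun m => Subtype.ext (Nat.sub_add_cancel m.2)⟩
  rw [← e.hasSum_iff, div_eq_mul_inv]
  simpa [e, Function.comp_def, pow_succ'] using (hasSum_geometric_of_norm_lt_one hu).mul_left u

lemma hasSum_mul_pow_mul_pow {K : Type*} [NormedField K] [CompleteSpace K] (c : K) {a b : K}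
    (ha : ‖a‖ < 1) (hb : ‖b‖ < 1) :
    HasSum (fun pq : ℕ × ℕ => c * a ^ pq.1 * b ^ pq.2) (c / ((1 - a) * (1 - b))) := by
  have h := ((hasSum_geometric_of_norm_lt_one ha).mul (hasSum_geometric_of_norm_lt_one hb)
    (summable_mul_of_summable_norm (summable_norm_geometric_of_norm_lt_one ha)
      (summable_norm_geometric_of_norm_lt_one hb))).mul_left c
  rw [div_eq_mul_inv, mul_inv]
  simpa only [mul_assoc] using h

lemma norm_mul_div_one_sub_le {K : Type*} [NormedField K] (c : K) {a : K} (ha : ‖a‖ < 1) :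
    ‖c * a / (1 - a)‖ ≤ ‖c‖ * ‖a‖ / (1 - ‖a‖) := by
  rw [norm_div, norm_mul]
  have h := norm_sub_norm_le (1 : K) a
  rw [norm_one] at h
  gcongr

lemma norm_cexp_neg_nat_mul_lt_one {m : ℕ} (hm : 1 ≤ m) {z : ℂ} (hz : 0 < z.re) :
    ‖cexp (-(m : ℂ) * z)‖ < 1 := by
  rw [norm_exp, Real.exp_lt_one_iff]
  have : (1 : ℝ) ≤ m := by exact_mod_cast hm
  simp
  nlinarith

namespace Zs

variable {I : Type*} (ℓ θ : I → ℝ) (k : ℤ)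

noncomputable def term (x : I × ℕ × ℕ) (w : ℂ) : ℂ :=
  cexp (Complex.I * ((k : ℂ) / 2) * (θ x.1 : ℂ))
    * cexp (-(x.2.1 : ℂ) * ((ℓ x.1 : ℂ) + Complex.I * (θ x.1 : ℂ)))
    * cexp (-(x.2.2 : ℂ) * ((ℓ x.1 : ℂ) - Complex.I * (θ x.1 : ℂ)))
    * cexp (-w * (ℓ x.1 : ℂ))

-- `z = (i, m)` stands for the class `γ₀^m`; the denominator is `e^{-m ℓ_i} D(γ₀^m)`.
noncomputable def geodesicTerm (s : ℂ) (z : I × {m : ℕ // 1 ≤ m}) : ℂ :=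
  (ℓ z.1 : ℂ) * cexp (Complex.I * ((k : ℂ) / 2) * ((z.2 : ℕ) : ℂ) * (θ z.1 : ℂ))
    * cexp (-s * ((z.2 : ℕ) : ℂ) * (ℓ z.1 : ℂ)) /
  ((1 - cexp (-((z.2 : ℕ) : ℂ) * ((ℓ z.1 : ℂ) + Complex.I * (θ z.1 : ℂ)))) *
   (1 - cexp (-((z.2 : ℕ) : ℂ) * ((ℓ z.1 : ℂ) - Complex.I * (θ z.1 : ℂ)))))

variable {ℓ θ k} {c : ℝ}

lemma norm_term (x : I × ℕ × ℕ) (w : ℂ) :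
    ‖term ℓ θ k x w‖ = rexp (-w.re * ℓ x.1) * rexp (-ℓ x.1) ^ x.2.1 * rexp (-ℓ x.1) ^ x.2.2 := by
  simp only [term, norm_mul, norm_exp, ← Real.exp_nat_mul, ← Real.exp_add]
  congr 1
  simp
  ring

lemma norm_term_le {x : I × ℕ × ℕ} {w : ℂ} (hℓ : 0 ≤ ℓ x.1) (hw : 2 ≤ w.re) :
    ‖term ℓ θ k x w‖ ≤ rexp (-2 * ℓ x.1) * rexp (-ℓ x.1) ^ x.2.1 * rexp (-ℓ x.1) ^ x.2.2 := by
  rw [norm_term]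
  gcongr

lemma norm_term_le_exp {x : I × ℕ × ℕ} {w : ℂ} (hc : 0 ≤ c) (hcℓ : c ≤ ℓ x.1)
    (hw : 2 ≤ w.re) : ‖term ℓ θ k x w‖ ≤ rexp (-2 * c) := by
  have hr : rexp (-ℓ x.1) ≤ 1 := Real.exp_le_one_iff.2 (by linarith)
  calc ‖term ℓ θ k x w‖
      ≤ rexp (-2 * ℓ x.1) * rexp (-ℓ x.1) ^ x.2.1 * rexp (-ℓ x.1) ^ x.2.2 :=
        norm_term_le (hc.trans hcℓ) hw
    _ ≤ rexp (-2 * ℓ x.1) * 1 * 1 := by gcongr <;> exact pow_le_one₀ (Real.exp_pos _).le hr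
    _ ≤ rexp (-2 * c) := by simpa using hcℓ

lemma norm_term_lt_one {x : I × ℕ × ℕ} {w : ℂ} (hℓ : 0 < ℓ x.1) (hw : 2 ≤ w.re) :
    ‖term ℓ θ k x w‖ < 1 :=
  (norm_term_le_exp hℓ.le le_rfl hw).trans_lt (Real.exp_lt_one_iff.2 (by linarith))

lemma hasDerivAt_term (x : I × ℕ × ℕ) (w : ℂ) :
    HasDerivAt (term ℓ θ k x) (-ℓ x.1 * term ℓ θ k x w) w := by
  have h := (((hasDerivAt_id w).neg.mul_const (ℓ x.1 : ℂ)).cexp).const_mul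
    (cexp (Complex.I * ((k : ℂ) / 2) * (θ x.1 : ℂ))
      * cexp (-(x.2.1 : ℂ) * ((ℓ x.1 : ℂ) + Complex.I * (θ x.1 : ℂ)))
      * cexp (-(x.2.2 : ℂ) * ((ℓ x.1 : ℂ) - Complex.I * (θ x.1 : ℂ))))
  refine h.congr_deriv ?_
  simp only [term, Pi.neg_apply, id]
  ring

lemma hasDerivAt_log_one_sub_term {x : I × ℕ × ℕ} {w : ℂ} (hx : ‖term ℓ θ k x w‖ < 1) :
    HasDerivAt (fun z => log (1 - term ℓ θ k x z))
      ((ℓ x.1 : ℂ) * term ℓ θ k x w / (1 - term ℓ θ k x w)) w := by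
  have hslit : 1 - term ℓ θ k x w ∈ slitPlane := by
    simpa [sub_eq_add_neg] using mem_slitPlane_of_norm_lt_one (z := -term ℓ θ k x w) (by simpa)
  convert ((hasDerivAt_term x w).const_sub 1).clog hslit using 1
  ring


lemma mul_norm_term_div_le (hc : 0 < c) (hcℓ : ∀ i, c ≤ ℓ i) (x : I × ℕ × ℕ) {w : ℂ}
    (hw : 2 ≤ w.re) :
    ℓ x.1 * ‖term ℓ θ k x w‖ / (1 - ‖term ℓ θ k x w‖) ≤
      ℓ x.1 * rexp (-2 * ℓ x.1) * rexp (-ℓ x.1) ^ x.2.1 * rexp (-ℓ x.1) ^ x.2.2 /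
        (1 - rexp (-2 * c)) := by
  have hℓ : 0 ≤ ℓ x.1 := hc.le.trans (hcℓ x.1)
  simpa only [mul_assoc] using mul_div_one_sub_le hℓ (norm_nonneg _) (norm_term_le hℓ hw)
    (norm_term_le_exp hc.le (hcℓ x.1) hw) (Real.exp_lt_one_iff.2 (by linarith))

lemma norm_mul_term_div_le (hc : 0 < c) (hcℓ : ∀ i, c ≤ ℓ i) (x : I × ℕ × ℕ) {w : ℂ}
    (hw : 2 ≤ w.re) :
    ‖(ℓ x.1 : ℂ) * term ℓ θ k x w / (1 - term ℓ θ k x w)‖ ≤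
      ℓ x.1 * rexp (-2 * ℓ x.1) * rexp (-ℓ x.1) ^ x.2.1 * rexp (-ℓ x.1) ^ x.2.2 /
        (1 - rexp (-2 * c)) := by
  have hℓ : 0 < ℓ x.1 := hc.trans_le (hcℓ x.1)
  refine (norm_mul_div_one_sub_le _ (norm_term_lt_one hℓ hw)).trans ?_
  simpa [abs_of_pos hℓ] using mul_norm_term_div_le hc hcℓ x hw

lemma summable_term (hc : 0 < c) (hcℓ : ∀ i, c ≤ ℓ i)
    (h2 : Summable fun i => rexp (-2 * ℓ i)) {w : ℂ} (hw : 2 ≤ w.re) :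
    Summable fun x => term ℓ θ k x w :=
  (summable_mul_exp_neg_pow_mul_pow hc hcℓ h2 fun _ => (Real.exp_pos _).le).of_norm_bounded
    fun x => norm_term_le (hc.le.trans (hcℓ x.1)) hw

lemma summable_log_one_sub_term (hc : 0 < c) (hcℓ : ∀ i, c ≤ ℓ i)
    (h2 : Summable fun i => rexp (-2 * ℓ i)) {w : ℂ} (hw : 2 ≤ w.re) :
    Summable fun x => log (1 - term ℓ θ k x w) := by
  simpa [sub_eq_add_neg] using summable_log_one_add_of_summable (summable_term hc hcℓ h2 hw).neg

lemma eq_cexp_tsum_log (hc : 0 < c) (hcℓ : ∀ i, c ≤ ℓ i)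
    (h2 : Summable fun i => rexp (-2 * ℓ i)) {w : ℂ} (hw : 2 ≤ w.re) :
    Zs ℓ θ k w = cexp (∑' x, log (1 - term ℓ θ k x w)) := by
  have hne : ∀ x, 1 - term ℓ θ k x w ≠ 0 := fun x => sub_ne_zero.2 fun h =>
    (norm_term_lt_one (hc.trans_le (hcℓ x.1)) hw).ne (by rw [← h, norm_one])
  exact (cexp_tsum_eq_tprod hne (summable_log_one_sub_term hc hcℓ h2 hw)).symm

lemma hasDerivAt_tsum_log (hc : 0 < c) (hcℓ : ∀ i, c ≤ ℓ i)
    (h2 : Summable fun i => rexp (-2 * ℓ i)) (h2' : Summable fun i => ℓ i * rexp (-2 * ℓ i))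
    {s : ℂ} (hs : 2 < s.re) :
    HasDerivAt (fun w => ∑' x, log (1 - term ℓ θ k x w))
      (∑' x, (ℓ x.1 : ℂ) * term ℓ θ k x s / (1 - term ℓ θ k x s)) s :=
  hasDerivAt_tsum_of_isPreconnected
    ((summable_mul_exp_neg_pow_mul_pow hc hcℓ h2' fun i =>
      mul_nonneg (hc.le.trans (hcℓ i)) (Real.exp_pos _).le).div_const _)
    (isOpen_lt continuous_const continuous_re) (convex_halfSpace_re_gt 2).isPreconnected
    (fun x _ hw => hasDerivAt_log_one_sub_term (norm_term_lt_one (hc.trans_le (hcℓ x.1)) hw.le))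
    (fun x _ hw => norm_mul_term_div_le hc hcℓ x (le_of_lt hw)) hs
    (summable_log_one_sub_term hc hcℓ h2 hs.le) hs


lemma term_pow (i : I) (p q m : ℕ) (s : ℂ) :
    term ℓ θ k (i, p, q) s ^ m =
      cexp (Complex.I * ((k : ℂ) / 2) * (m : ℂ) * (θ i : ℂ)) * cexp (-s * (m : ℂ) * (ℓ i : ℂ))
        * cexp (-(m : ℂ) * ((ℓ i : ℂ) + Complex.I * (θ i : ℂ))) ^ p
        * cexp (-(m : ℂ) * ((ℓ i : ℂ) - Complex.I * (θ i : ℂ))) ^ q := by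
  simp only [term, ← Complex.exp_nat_mul, ← Complex.exp_add]
  congr 1
  ring

lemma hasSum_mul_term_pow {x : I × ℕ × ℕ} {s : ℂ} (hℓ : 0 < ℓ x.1) (hs : 2 ≤ s.re) :
    HasSum (fun m : {m : ℕ // 1 ≤ m} => (ℓ x.1 : ℂ) * term ℓ θ k x s ^ (m : ℕ))
      ((ℓ x.1 : ℂ) * term ℓ θ k x s / (1 - term ℓ θ k x s)) := by
  simpa only [mul_div_assoc] using
    (hasSum_pow_of_one_le (norm_term_lt_one hℓ hs)).mul_left (ℓ x.1 : ℂ)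

lemma summable_mul_term_pow (hc : 0 < c) (hcℓ : ∀ i, c ≤ ℓ i)
    (h2' : Summable fun i => ℓ i * rexp (-2 * ℓ i)) {s : ℂ} (hs : 2 ≤ s.re) :
    Summable fun y : (I × ℕ × ℕ) × {m : ℕ // 1 ≤ m} =>
      (ℓ y.1.1 : ℂ) * term ℓ θ k y.1 s ^ (y.2 : ℕ) := by
  have hfiber (x : I × ℕ × ℕ) : HasSum (fun m : {m : ℕ // 1 ≤ m} =>
      ‖(ℓ x.1 : ℂ) * term ℓ θ k x s ^ (m : ℕ)‖)
      (ℓ x.1 * ‖term ℓ θ k x s‖ / (1 - ‖term ℓ θ k x s‖)) := by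
    have hℓ : 0 < ℓ x.1 := hc.trans_le (hcℓ x.1)
    have hlt : ‖‖term ℓ θ k x s‖‖ < 1 := by simpa using norm_term_lt_one hℓ hs
    simpa [abs_of_pos hℓ, mul_div_assoc] using (hasSum_pow_of_one_le hlt).mul_left (ℓ x.1)
  refine Summable.of_norm <| (summable_prod_of_nonneg fun _ => norm_nonneg _).2
    ⟨fun x => (hfiber x).summable, ?_⟩
  refine ((summable_mul_exp_neg_pow_mul_pow hc hcℓ h2' fun i =>
    mul_nonneg (hc.le.trans (hcℓ i)) (Real.exp_pos _).le).div_const (1 - rexp (-2 * c)))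
    |>.of_nonneg_of_le (fun _ => tsum_nonneg fun _ => norm_nonneg _) fun x => ?_
  rw [(hfiber x).tsum_eq]
  exact mul_norm_term_div_le hc hcℓ x hs

/-- Both sides are iterated sums, in the two orders, of the absolutely summable family
`ℓ_i a_x(s)^m` indexed by `(x, m)`. -/
lemma hasSum_geodesicTerm (hc : 0 < c) (hcℓ : ∀ i, c ≤ ℓ i)
    (h2' : Summable fun i => ℓ i * rexp (-2 * ℓ i)) {s : ℂ} (hs : 2 ≤ s.re) :
    HasSum (geodesicTerm ℓ θ k s)
      (∑' x, (ℓ x.1 : ℂ) * term ℓ θ k x s / (1 - term ℓ θ k x s)) := by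
  have hG := summable_mul_term_pow (θ := θ) (k := k) hc hcℓ h2' hs
  have hsum_x :=
    hG.hasSum.prod_fiberwise fun x => hasSum_mul_term_pow (hc.trans_le (hcℓ x.1)) hs
  let e : (I × {m : ℕ // 1 ≤ m}) × (ℕ × ℕ) ≃ (I × ℕ × ℕ) × {m : ℕ // 1 ≤ m} :=
    ⟨fun y => ((y.1.1, y.2), y.1.2), fun z => ((z.1.1, z.2), z.1.2), fun _ => rfl, fun _ => rfl⟩
  rw [hsum_x.tsum_eq]
  refine (e.hasSum_iff.2 hG.hasSum).prod_fiberwise fun ⟨i, m, hm⟩ => ?_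
  have hℓ : 0 < ℓ i := hc.trans_le (hcℓ i)
  have hgeom := hasSum_mul_pow_mul_pow
    ((ℓ i : ℂ) * cexp (Complex.I * ((k : ℂ) / 2) * (m : ℂ) * (θ i : ℂ))
      * cexp (-s * (m : ℂ) * (ℓ i : ℂ)))
    (norm_cexp_neg_nat_mul_lt_one hm (z := (ℓ i : ℂ) + Complex.I * (θ i : ℂ)) (by simpa using hℓ))
    (norm_cexp_neg_nat_mul_lt_one hm (z := (ℓ i : ℂ) - Complex.I * (θ i : ℂ)) (by simpa using hℓ))
  change HasSum (fun pq : ℕ × ℕ => (ℓ i : ℂ) * term ℓ θ k (i, pq.1, pq.2) s ^ m) _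
  simp only [term_pow, ← mul_assoc]
  exact hgeom

end Zs

theorem statement16_general {I : Type*} (ℓ θ : I → ℝ)
    (hℓ : ∀ i, 0 < ℓ i) (δ : ℝ) (hδ : δ < 2)
    (hsum : Summable fun i => Real.exp (-δ * ℓ i))
    (k : ℤ) (s : ℂ) (hs : 2 < s.re) :
    (Summable fun x : I × {m : ℕ // 1 ≤ m} =>
      (ℓ x.1 : ℂ) * Complex.exp (Complex.I * ((k : ℂ) / 2) * ((x.2 : ℕ) : ℂ) * (θ x.1 : ℂ))
        * Complex.exp (-s * ((x.2 : ℕ) : ℂ) * (ℓ x.1 : ℂ)) /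
      ((1 - Complex.exp (-((x.2 : ℕ) : ℂ) * ((ℓ x.1 : ℂ) + Complex.I * (θ x.1 : ℂ)))) *
       (1 - Complex.exp (-((x.2 : ℕ) : ℂ) * ((ℓ x.1 : ℂ) - Complex.I * (θ x.1 : ℂ)))))) ∧
    HasDerivAt (fun w : ℂ => Zs ℓ θ k w)
      (Zs ℓ θ k s *
        ∑' x : I × {m : ℕ // 1 ≤ m},
          (ℓ x.1 : ℂ) * Complex.exp (Complex.I * ((k : ℂ) / 2) * ((x.2 : ℕ) : ℂ) * (θ x.1 : ℂ))
            * Complex.exp (-s * ((x.2 : ℕ) : ℂ) * (ℓ x.1 : ℂ)) /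
          ((1 - Complex.exp (-((x.2 : ℕ) : ℂ) * ((ℓ x.1 : ℂ) + Complex.I * (θ x.1 : ℂ)))) *
           (1 - Complex.exp (-((x.2 : ℕ) : ℂ) * ((ℓ x.1 : ℂ) - Complex.I * (θ x.1 : ℂ)))))) s := by
  obtain ⟨c, hc, hcℓ⟩ := exists_pos_forall_le_of_summable_exp hℓ hsum
  have h2 : Summable fun i => rexp (-2 * ℓ i) := hsum.of_nonneg_of_le
    (fun _ => (Real.exp_pos _).le) fun i => Real.exp_le_exp.2 (by nlinarith [hℓ i])
  have h2' := summable_mul_exp_neg_two_mul (fun i => (hℓ i).le) hδ hsum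
  have hgeod := Zs.hasSum_geodesicTerm (θ := θ) (k := k) hc hcℓ h2' hs.le
  have hderiv : HasDerivAt (Zs ℓ θ k) (Zs ℓ θ k s * ∑' z, Zs.geodesicTerm ℓ θ k s z) s := by
    rw [hgeod.tsum_eq, Zs.eq_cexp_tsum_log hc hcℓ h2 hs.le]
    refine (Zs.hasDerivAt_tsum_log hc hcℓ h2 h2' hs).cexp.congr_of_eventuallyEq ?_
    filter_upwards [(isOpen_lt continuous_const continuous_re).mem_nhds hs] with w hw
    exact Zs.eq_cexp_tsum_log hc hcℓ h2 (le_of_lt hw)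
  exact ⟨hgeod.summable, hderiv⟩

/-- logarithmic derivative of the Selberg zeta function as an absolutely
convergent sum over closed geodesics `γ = γ₀^m`. -/
theorem statement16 {I : Type*} [Countable I] (ℓ θ : I → ℝ)
    (hℓ : ∀ i, 0 < ℓ i) (δ : ℝ) (hδ : δ < 2)
    (hsum : Summable fun i => Real.exp (-δ * ℓ i))
    (k : ℤ) (s : ℂ) (hs : 2 < s.re) :
    (Summable fun x : I × {m : ℕ // 1 ≤ m} =>
      (ℓ x.1 : ℂ) * Complex.exp (Complex.I * ((k : ℂ) / 2) * ((x.2 : ℕ) : ℂ) * (θ x.1 : ℂ))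
        * Complex.exp (-s * ((x.2 : ℕ) : ℂ) * (ℓ x.1 : ℂ)) /
      ((1 - Complex.exp (-((x.2 : ℕ) : ℂ) * ((ℓ x.1 : ℂ) + Complex.I * (θ x.1 : ℂ)))) *
       (1 - Complex.exp (-((x.2 : ℕ) : ℂ) * ((ℓ x.1 : ℂ) - Complex.I * (θ x.1 : ℂ)))))) ∧
    HasDerivAt (fun w : ℂ => Zs ℓ θ k w)
      (Zs ℓ θ k s *
        ∑' x : I × {m : ℕ // 1 ≤ m},
          (ℓ x.1 : ℂ) * Complex.exp (Complex.I * ((k : ℂ) / 2) * ((x.2 : ℕ) : ℂ) * (θ x.1 : ℂ))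
            * Complex.exp (-s * ((x.2 : ℕ) : ℂ) * (ℓ x.1 : ℂ)) /
          ((1 - Complex.exp (-((x.2 : ℕ) : ℂ) * ((ℓ x.1 : ℂ) + Complex.I * (θ x.1 : ℂ)))) *
           (1 - Complex.exp (-((x.2 : ℕ) : ℂ) * ((ℓ x.1 : ℂ) - Complex.I * (θ x.1 : ℂ)))))) s :=
  statement16_general ℓ θ hℓ δ hδ hsum k s hs
end

section
/- (Factorization of the twisted Selberg zeta function Z_{ρ_m}(σ_k, s).) Let m ∈ ℕ and k ∈ ℤ, and suppose that for every i ∈ I the matrix A i ∈ Matrix (Fin (m+1)) (Fin (m+1)) ℂ is similar to the diagonal matrix whose diagonal entries are exp((m/2 − l)·(ℓ i + i·θ i)) for l = 0, 1, …, m (this is ρ_m(γ_i) for the m-th symmetric power ρ_m of the standard representation of SL(2,ℂ)). Then for every s ∈ ℂ with Re(s) > 2 + m/2, the family over (i, p, q) ∈ I × ℕ × ℕ given by det( 1 − exp(i(k/2)·θ i)·exp(−p(ℓ i + i·θ i))·exp(−q(ℓ i − i·θ i))·exp(−s·ℓ i) · (A i) ) is multipliable, and its product equals ∏_{l=0}^{m}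 Z(m − 2l + k, s − m/2 + l). -/
/-!
Diagonalising `ρ_m(γ)` gives `det (1 - c ρ_m(γ)) = ∏_l (1 - c e^{(m/2 - l)(ℓ + iθ)})`, and
the `l`-th factor is exactly a factor of `Z(m - 2l + k, s - m/2 + l)`: the phase `e^{(m/2-l) iθ}`
shifts the weight `k` by `m - 2l`, and `e^{(m/2-l)ℓ}` shifts `s` by `l - m/2`. Each of these
`m + 1` Selberg products converges absolutely, because `Re (s - m/2 + l) > 2 > δ`, so the product
over `(i, p, q)` splits into the product of the `m + 1` zeta values.
-/

theorem Matrix.det_one_sub_smul_conj_diagonal {n R : Type*} [Fintype n] [DecidableEq n]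
    [CommRing R] {P : Matrix n n R} (hP : IsUnit P.det) (d : n → R) (c : R) :
    (1 - c • (P * Matrix.diagonal d * P⁻¹)).det = ∏ j, (1 - c * d j) := by
  have hconj : 1 - c • (P * Matrix.diagonal d * P⁻¹)
      = P * Matrix.diagonal (fun j => 1 - c * d j) * P⁻¹ := by
    have hdiag : Matrix.diagonal (fun j => 1 - c * d j) = 1 - c • Matrix.diagonal d := by
      rw [← Matrix.diagonal_one, ← Matrix.diagonal_smul, Matrix.diagonal_sub]
      rfl
    rw [hdiag, Matrix.mul_sub, Matrix.sub_mul, Matrix.mul_one, Matrix.mul_nonsing_inv _ hP,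
      Matrix.mul_smul, Matrix.smul_mul]
  rw [hconj, Matrix.det_conj ((Matrix.isUnit_iff_isUnit_det P).2 hP), Matrix.det_diagonal]

section Selberg

variable {I : Type*} {ℓ θ : I → ℝ}

variable (ℓ θ) in
noncomputable def selbergTerm (k : ℤ) (s : ℂ) (x : I × ℕ × ℕ) : ℂ :=
  Complex.exp (Complex.I * ((k : ℂ) / 2) * (θ x.1 : ℂ))
    * Complex.exp (-(x.2.1 : ℂ) * ((ℓ x.1 : ℂ) + Complex.I * (θ x.1 : ℂ)))
    * Complex.exp (-(x.2.2 : ℂ) * ((ℓ x.1 : ℂ) - Complex.I * (θ x.1 : ℂ)))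
    * Complex.exp (-s * (ℓ x.1 : ℂ))

theorem Zs_eq_tprod (k : ℤ) (s : ℂ) :
    Zs ℓ θ k s = ∏' x, (1 - selbergTerm ℓ θ k s x) := rfl

theorem selbergTerm_mul_exp (k : ℤ) (s : ℂ) (m l : ℕ) (x : I × ℕ × ℕ) :
    selbergTerm ℓ θ k s x
        * Complex.exp (((m : ℂ) / 2 - (l : ℂ)) * ((ℓ x.1 : ℂ) + Complex.I * (θ x.1 : ℂ)))
      = selbergTerm ℓ θ ((m : ℤ) - 2 * (l : ℤ) + k) (s - (m : ℂ) / 2 + (l : ℂ)) x := by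
  simp only [selbergTerm, ← Complex.exp_add]
  congr 1
  push_cast
  ring

theorem norm_selbergTerm (k : ℤ) (s : ℂ) (x : I × ℕ × ℕ) :
    ‖selbergTerm ℓ θ k s x‖ = Real.exp (-(((x.2.1 : ℝ) + x.2.2) + s.re) * ℓ x.1) := by
  simp only [selbergTerm, norm_mul, Complex.norm_exp, ← Real.exp_add]
  congr 1
  simp only [Complex.mul_re, Complex.mul_im, Complex.add_re, Complex.add_im, Complex.sub_re,
    Complex.sub_im, Complex.neg_re, Complex.neg_im, Complex.I_re, Complex.I_im, Complex.ofReal_re,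
    Complex.ofReal_im, Complex.natCast_re, Complex.natCast_im, Complex.intCast_re,
    Complex.intCast_im, Complex.div_ofNat_re, Complex.div_ofNat_im]
  ring

theorem exists_pos_le_of_summable_exp (hℓ : ∀ i, 0 < ℓ i) {δ : ℝ}
    (hsum : Summable fun i => Real.exp (-δ * ℓ i)) : ∃ ε > 0, ∀ i, ε ≤ ℓ i := by
  -- `exp (-δ ℓ i) ≥ exp (-max δ 0)` whenever `ℓ i < 1`, and a summable family has only finitely
  -- many terms above a positive constant.
  have hfin : {i | ℓ i < 1}.Finite := by
    refine (Filter.eventually_cofinite.1 (hsum.tendsto_cofinite_zero.eventually_lt_const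
      (Real.exp_pos (-max δ 0)))).subset fun i hi => ?_
    rw [Set.mem_ofPred_eq, not_lt, Real.exp_le_exp]
    nlinarith [mul_le_mul_of_nonneg_right (le_max_left δ 0) (hℓ i).le,
      mul_le_mul_of_nonneg_left (hi : ℓ i < 1).le (le_max_right δ 0)]
  by_cases hne : {i | ℓ i < 1}.Nonempty
  · obtain ⟨j, hj, hmin⟩ := Set.exists_min_image _ ℓ hfin hne
    refine ⟨ℓ j, hℓ j, fun i => ?_⟩
    by_cases hi : ℓ i < 1
    · exact hmin i hi
    · exact (hj : ℓ j < 1).le.trans (not_lt.1 hi)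
  · exact ⟨1, one_pos, fun i => not_lt.1 fun hi => hne ⟨i, hi⟩⟩

theorem summable_exp_neg_mul_length (hℓ : ∀ i, 0 < ℓ i) {δ σ : ℝ}
    (hsum : Summable fun i => Real.exp (-δ * ℓ i)) (hδσ : δ ≤ σ) :
    Summable fun x : I × ℕ × ℕ => Real.exp (-(((x.2.1 : ℝ) + x.2.2) + σ) * ℓ x.1) := by
  obtain ⟨ε, hε, hεℓ⟩ := exists_pos_le_of_summable_exp hℓ hsum
  -- majorant: `exp (-(p + q + σ) ℓ i) ≤ exp (-δ ℓ i) · e^{-ε p} · e^{-ε q}`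
  have hgeom : Summable fun p : ℕ => Real.exp (-ε) ^ p :=
    summable_geometric_of_lt_one (Real.exp_nonneg _) (Real.exp_lt_one_iff.2 (neg_neg_of_pos hε))
  refine Summable.of_nonneg_of_le (fun _ => Real.exp_nonneg _) (fun x => ?_)
    (hsum.mul_of_nonneg (hgeom.mul_of_nonneg hgeom (fun _ => by positivity) fun _ => by positivity)
      (fun _ => Real.exp_nonneg _) fun _ => by positivity)
  simp only [← Real.exp_nat_mul, ← Real.exp_add, Real.exp_le_exp]
  nlinarith [hℓ x.1, hεℓ x.1, (Nat.cast_nonneg x.2.1 : (0 : ℝ) ≤ x.2.1),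
    (Nat.cast_nonneg x.2.2 : (0 : ℝ) ≤ x.2.2)]

theorem multipliable_one_sub_selbergTerm (hℓ : ∀ i, 0 < ℓ i) {δ : ℝ}
    (hsum : Summable fun i => Real.exp (-δ * ℓ i)) (k : ℤ) {s : ℂ} (hs : δ ≤ s.re) :
    Multipliable fun x => 1 - selbergTerm ℓ θ k s x := by
  simp only [sub_eq_add_neg]
  refine multipliable_one_add_of_summable ?_
  simpa only [norm_neg, norm_selbergTerm] using summable_exp_neg_mul_length hℓ hsum hs

end Selberg

theorem statement17_general {I : Type*} (ℓ θ : I → ℝ)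
    (hℓ : ∀ i, 0 < ℓ i) (δ : ℝ) (hδ : δ < 2)
    (hsum : Summable fun i => Real.exp (-δ * ℓ i))
    (m : ℕ) (k : ℤ) (A : I → Matrix (Fin (m + 1)) (Fin (m + 1)) ℂ)
    (hA : ∀ i : I, ∃ P : Matrix (Fin (m + 1)) (Fin (m + 1)) ℂ, IsUnit P.det ∧
      A i = P * Matrix.diagonal (fun l : Fin (m + 1) =>
        Complex.exp (((m : ℂ) / 2 - ((l : ℕ) : ℂ)) * ((ℓ i : ℂ) + Complex.I * (θ i : ℂ)))) * P⁻¹)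
    (s : ℂ) (hs : 2 + (m : ℝ) / 2 < s.re) :
    (Multipliable fun x : I × ℕ × ℕ =>
      Matrix.det (1 -
        (Complex.exp (Complex.I * ((k : ℂ) / 2) * (θ x.1 : ℂ))
          * Complex.exp (-(x.2.1 : ℂ) * ((ℓ x.1 : ℂ) + Complex.I * (θ x.1 : ℂ)))
          * Complex.exp (-(x.2.2 : ℂ) * ((ℓ x.1 : ℂ) - Complex.I * (θ x.1 : ℂ)))
          * Complex.exp (-s * (ℓ x.1 : ℂ))) • A x.1)) ∧
    (∏' x : I × ℕ × ℕ,
      Matrix.det (1 -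
        (Complex.exp (Complex.I * ((k : ℂ) / 2) * (θ x.1 : ℂ))
          * Complex.exp (-(x.2.1 : ℂ) * ((ℓ x.1 : ℂ) + Complex.I * (θ x.1 : ℂ)))
          * Complex.exp (-(x.2.2 : ℂ) * ((ℓ x.1 : ℂ) - Complex.I * (θ x.1 : ℂ)))
          * Complex.exp (-s * (ℓ x.1 : ℂ))) • A x.1)) =
      ∏ l ∈ Finset.range (m + 1),
        Zs ℓ θ ((m : ℤ) - 2 * (l : ℤ) + k) (s - (m : ℂ) / 2 + (l : ℂ)) := by
  have hdet : ∀ x : I × ℕ × ℕ, (1 - selbergTerm ℓ θ k s x • A x.1).det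
      = ∏ l ∈ Finset.range (m + 1),
          (1 - selbergTerm ℓ θ ((m : ℤ) - 2 * (l : ℤ) + k) (s - (m : ℂ) / 2 + (l : ℂ)) x) := by
    intro x
    obtain ⟨P, hP, hAx⟩ := hA x.1
    rw [hAx, Matrix.det_one_sub_smul_conj_diagonal hP, Fin.prod_univ_eq_prod_range (fun l : ℕ =>
      1 - selbergTerm ℓ θ k s x
        * Complex.exp (((m : ℂ) / 2 - (l : ℂ)) * ((ℓ x.1 : ℂ) + Complex.I * (θ x.1 : ℂ))))]
    simp only [selbergTerm_mul_exp]
  have hmult : ∀ l ∈ Finset.range (m + 1), Multipliable fun x =>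
      1 - selbergTerm ℓ θ ((m : ℤ) - 2 * (l : ℤ) + k) (s - (m : ℂ) / 2 + (l : ℂ)) x := by
    intro l _
    refine multipliable_one_sub_selbergTerm hℓ hsum _ ?_
    simp only [Complex.add_re, Complex.sub_re, Complex.div_ofNat_re, Complex.natCast_re]
    linarith [(Nat.cast_nonneg l : (0 : ℝ) ≤ l)]
  refine ⟨(multipliable_congr hdet).2 (multipliable_prod hmult), ?_⟩
  simp only [Zs_eq_tprod]
  exact (tprod_congr hdet).trans (Multipliable.tprod_finsetProd hmult)

/-- factorization of the twisted Selberg zeta function `Z_{ρ_m}(σ_k, s)`. -/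
theorem statement17 {I : Type*} [Countable I] (ℓ θ : I → ℝ)
    (hℓ : ∀ i, 0 < ℓ i) (δ : ℝ) (hδ : δ < 2)
    (hsum : Summable fun i => Real.exp (-δ * ℓ i))
    (m : ℕ) (k : ℤ) (A : I → Matrix (Fin (m + 1)) (Fin (m + 1)) ℂ)
    (hA : ∀ i : I, ∃ P : Matrix (Fin (m + 1)) (Fin (m + 1)) ℂ, IsUnit P.det ∧
      A i = P * Matrix.diagonal (fun l : Fin (m + 1) =>
        Complex.exp (((m : ℂ) / 2 - ((l : ℕ) : ℂ)) * ((ℓ i : ℂ) + Complex.I * (θ i : ℂ)))) * P⁻¹)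
    (s : ℂ) (hs : 2 + (m : ℝ) / 2 < s.re) :
    (Multipliable fun x : I × ℕ × ℕ =>
      Matrix.det (1 -
        (Complex.exp (Complex.I * ((k : ℂ) / 2) * (θ x.1 : ℂ))
          * Complex.exp (-(x.2.1 : ℂ) * ((ℓ x.1 : ℂ) + Complex.I * (θ x.1 : ℂ)))
          * Complex.exp (-(x.2.2 : ℂ) * ((ℓ x.1 : ℂ) - Complex.I * (θ x.1 : ℂ)))
          * Complex.exp (-s * (ℓ x.1 : ℂ))) • A x.1)) ∧
    (∏' x : I × ℕ × ℕ,
      Matrix.det (1 -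
        (Complex.exp (Complex.I * ((k : ℂ) / 2) * (θ x.1 : ℂ))
          * Complex.exp (-(x.2.1 : ℂ) * ((ℓ x.1 : ℂ) + Complex.I * (θ x.1 : ℂ)))
          * Complex.exp (-(x.2.2 : ℂ) * ((ℓ x.1 : ℂ) - Complex.I * (θ x.1 : ℂ)))
          * Complex.exp (-s * (ℓ x.1 : ℂ))) • A x.1)) =
      ∏ l ∈ Finset.range (m + 1),
        Zs ℓ θ ((m : ℤ) - 2 * (l : ℤ) + k) (s - (m : ℂ) / 2 + (l : ℂ)) :=
  statement17_general ℓ θ hℓ δ hδ hsum m k A hA s hs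
end
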